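/- Let X be a uniformly discrete metric space, 0 < α ≤ 1, and A either Lip_α(X) or lip_α(X). Then A satisfies condition (M). -/

import Mathlib

open WeakDual Topology Filter

/-- The set of Hölder difference quotients of `f`. -/
def lipRatioSet {X : Type*} [MetricSpace X] (α : ℝ) (f : X → ℂ) : Set ℝ :=
  {r | ∃ x y : X, x ≠ y ∧ r = ‖f x - f y‖ / dist x y ^ α}

/-- The Hölder seminorm of `f`. -/
noncomputable def lipSemi {X : Type*} [MetricSpace X] (α : ℝ) (f : X → ℂ) : ℝ :=
  sSup ({0} ∪ lipRatioSet α f)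

/-- The sup norm of `f`. -/
noncomputable def supNorm {X : Type*} (f : X → ℂ) : ℝ :=
  sSup ({0} ∪ Set.range fun x => ‖f x‖)

/-- The norm of the Lipschitz algebra `Lip_α(X)`. -/
noncomputable def lipNorm {X : Type*} [MetricSpace X] (α : ℝ) (f : X → ℂ) : ℝ :=
  supNorm f + lipSemi α f

/-- Membership in the (big) Lipschitz algebra `Lip_α(X)`. -/
def MemLipAlg {X : Type*} [MetricSpace X] (α : ℝ) (f : X → ℂ) : Prop :=
  (∃ B : ℝ, ∀ x, ‖f x‖ ≤ B) ∧ (∃ C : ℝ, ∀ x y, ‖f x - f y‖ ≤ C * dist x y ^ α)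

/-- Membership in the little Lipschitz algebra `lip_α(X)`. -/
def MemLittleLip {X : Type*} [MetricSpace X] (α : ℝ) (f : X → ℂ) : Prop :=
  MemLipAlg α f ∧
    ∀ ε > (0:ℝ), ∃ δ > (0:ℝ), ∀ x y : X, x ≠ y → dist x y < δ →
      ‖f x - f y‖ ≤ ε * dist x y ^ α

/-- `X` is uniformly discrete with bound `dX`. -/
def UniformlyDiscrete (X : Type*) [MetricSpace X] (dX : ℝ) : Prop :=
  ∀ x y : X, x ≠ y → dX < dist x y

variable (A : Type*) [NormedCommRing A] [NormedAlgebra ℂ A]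

/-- Condition (M). -/
def ConditionM : Prop :=
  (∀ (x : WeakDual.characterSpace ℂ A) (U : Set (WeakDual.characterSpace ℂ A)),
      IsOpen U → x ∈ U →
      ∃ a : A, x a = 1 ∧ ∀ y : WeakDual.characterSpace ℂ A, y ∉ U → y a = 0) ∧
  ∀ (x : WeakDual.characterSpace ℂ A) (a : A), x a = 0 →
    ∀ U ∈ 𝓝 x, ∀ ε > (0:ℝ), ∃ b : A,
      (∃ V ∈ 𝓝 x, ∀ y ∈ V, y b = 1) ∧
      closure {y : WeakDual.characterSpace ℂ A | y b ≠ 0} ⊆ U ∧ ‖b * a‖ < ε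

/-! On a uniformly discrete space every bounded function `f` is `α`-Hölder, with
`lipNorm α f ≤ (1 + 2 / dX ^ α) * sup ‖f‖`; so both algebras consist of all bounded functions, with
a norm equivalent to the sup norm. For `W` open in the maximal ideal space, density of `X` makes
the Gelfand transform of the indicator of `ev ⁻¹' W` equal to `1` on `W` and supported in
`closure W`. Multiplying `a` with `φ(a) = 0` by such an indicator, for `W` inside the open set where
`|â| < δ`, gives an element of small sup norm, hence of small norm. -/

lemma supNorm_le {X : Type*} {f : X → ℂ} {B : ℝ} (hB : 0 ≤ B) (h : ∀ x, ‖f x‖ ≤ B) :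
    supNorm f ≤ B := by
  apply Real.sSup_le _ hB
  rintro r (hr | ⟨x, rfl⟩)
  · exact (Set.mem_singleton_iff.1 hr).trans_le hB
  · exact h x

lemma lipSemi_le {X : Type*} [MetricSpace X] {α : ℝ} {f : X → ℂ} {C : ℝ} (hC : 0 ≤ C)
    (h : ∀ x y : X, x ≠ y → ‖f x - f y‖ / dist x y ^ α ≤ C) : lipSemi α f ≤ C := by
  apply Real.sSup_le _ hC
  rintro r (hr | ⟨x, y, hxy, rfl⟩)
  · exact (Set.mem_singleton_iff.1 hr).trans_le hC
  · exact h x y hxy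

namespace UniformlyDiscrete

variable {X : Type*} [MetricSpace X] {α dX : ℝ}

theorem norm_sub_le_of_norm_le (hud : UniformlyDiscrete X dX) (hdX : 0 < dX) (hα : 0 ≤ α)
    {f : X → ℂ} {B : ℝ} (hf : ∀ x, ‖f x‖ ≤ B) (x y : X) :
    ‖f x - f y‖ ≤ 2 * B / dX ^ α * dist x y ^ α := by
  have hB : 0 ≤ B := (norm_nonneg _).trans (hf x)
  rcases eq_or_ne x y with rfl | hxy
  · rw [sub_self, norm_zero]
    positivity
  calc ‖f x - f y‖ ≤ ‖f x‖ + ‖f y‖ := norm_sub_le _ _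
    _ ≤ 2 * B := by linarith [hf x, hf y]
    _ = 2 * B / dX ^ α * dX ^ α := (div_mul_cancel₀ _ (by positivity)).symm
    _ ≤ 2 * B / dX ^ α * dist x y ^ α := by
      gcongr
      exact (hud x y hxy).le

theorem memLittleLip_of_norm_le (hud : UniformlyDiscrete X dX) (hdX : 0 < dX) (hα : 0 ≤ α)
    {f : X → ℂ} {B : ℝ} (hf : ∀ x, ‖f x‖ ≤ B) : MemLittleLip α f :=
  ⟨⟨⟨B, hf⟩, ⟨_, hud.norm_sub_le_of_norm_le hdX hα hf⟩⟩,
    fun _ _ => ⟨dX, hdX, fun x y hxy hlt => (lt_asymm hlt (hud x y hxy)).elim⟩⟩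

theorem lipNorm_le_of_norm_le (hud : UniformlyDiscrete X dX) (hdX : 0 < dX) (hα : 0 ≤ α)
    {f : X → ℂ} {B : ℝ} (hB : 0 ≤ B) (hf : ∀ x, ‖f x‖ ≤ B) :
    lipNorm α f ≤ (1 + 2 / dX ^ α) * B := by
  have hsemi : lipSemi α f ≤ 2 * B / dX ^ α :=
    lipSemi_le (by positivity) fun x y _ =>
      div_le_of_le_mul₀ (by positivity) (by positivity) (hud.norm_sub_le_of_norm_le hdX hα hf x y)
  calc lipNorm α f ≤ B + 2 * B / dX ^ α := add_le_add (supNorm_le hB hf) hsemi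
    _ = (1 + 2 / dX ^ α) * B := by ring

theorem exists_lipNorm_lt (hud : UniformlyDiscrete X dX) (hdX : 0 < dX) (hα : 0 ≤ α)
    {ε : ℝ} (hε : 0 < ε) : ∃ δ > 0, ∀ f : X → ℂ, (∀ x, ‖f x‖ ≤ δ) → lipNorm α f < ε := by
  have hC : 0 < 1 + 2 / dX ^ α := by positivity
  refine ⟨ε / 2 / (1 + 2 / dX ^ α), by positivity, fun f hf => ?_⟩
  calc lipNorm α f ≤ (1 + 2 / dX ^ α) * (ε / 2 / (1 + 2 / dX ^ α)) :=
        hud.lipNorm_le_of_norm_le hdX hα (by positivity) hf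
    _ = ε / 2 := mul_div_cancel₀ _ hC.ne'
    _ < ε := half_lt_self hε

end UniformlyDiscrete

section GelfandIndicator

variable {A} {X : Type*} {j : A →ₐ[ℂ] (X → ℂ)} {ev : X → characterSpace ℂ A}

lemma continuous_characterSpace_apply (a : A) :
    Continuous fun ψ : characterSpace ℂ A => ψ a :=
  (WeakDual.eval_continuous a).comp continuous_subtype_val

lemma apply_eq_one_of_eq_indicator (heval : ∀ x a, ev x a = j a x) (hdense : DenseRange ev)
    {W : Set (characterSpace ℂ A)} (hW : IsOpen W) {b : A} (hb : j b = (ev ⁻¹' W).indicator 1)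
    {ψ : characterSpace ℂ A} (hψ : ψ ∈ W) : ψ b = 1 := by
  have hone : Set.EqOn (fun ψ : characterSpace ℂ A => ψ b) 1 (ev '' (ev ⁻¹' W)) := by
    rintro _ ⟨x, hx, rfl⟩
    change ev x b = 1
    rw [heval, hb, Set.indicator_of_mem hx, Pi.one_apply]
  exact hone.closure (continuous_characterSpace_apply b) continuous_const
    (hdense.subset_closure_image_preimage_of_isOpen hW hψ)

lemma setOf_apply_ne_zero_subset_closure (heval : ∀ x a, ev x a = j a x)
    (hdense : DenseRange ev) {W : Set (characterSpace ℂ A)} {b : A}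
    (hb : j b = (ev ⁻¹' W).indicator 1) : {ψ : characterSpace ℂ A | ψ b ≠ 0} ⊆ closure W := by
  have hopen : IsOpen {ψ : characterSpace ℂ A | ψ b ≠ 0} :=
    isOpen_compl_singleton.preimage (continuous_characterSpace_apply b)
  refine (hdense.subset_closure_image_preimage_of_isOpen hopen).trans (closure_mono ?_)
  rintro _ ⟨x, hx, rfl⟩
  rw [Set.mem_preimage, Set.mem_ofPred_eq, heval, hb] at hx
  exact Set.mem_preimage.1 (Set.mem_of_indicator_ne_zero hx)

lemma exists_bump_of_isOpen (heval : ∀ x a, ev x a = j a x) (hdense : DenseRange ev)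
    (hind : ∀ S : Set X, S.indicator 1 ∈ Set.range j) {φ : characterSpace ℂ A}
    {N : Set (characterSpace ℂ A)} (hN : IsOpen N) (hφ : φ ∈ N) :
    ∃ W ⊆ N, ∃ b : A, j b = (ev ⁻¹' W).indicator 1 ∧ W ∈ 𝓝 φ ∧ (∀ ψ ∈ W, ψ b = 1) ∧
      closure {ψ : characterSpace ℂ A | ψ b ≠ 0} ⊆ N := by
  obtain ⟨s, hs, hsClosed, hsN⟩ := exists_mem_nhds_isClosed_subset (hN.mem_nhds hφ)
  obtain ⟨b, hb⟩ := hind (ev ⁻¹' interior s)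
  refine ⟨interior s, interior_subset.trans hsN, b, hb, interior_mem_nhds.2 hs,
    fun ψ hψ => apply_eq_one_of_eq_indicator heval hdense isOpen_interior hb hψ, ?_⟩
  have hsupp : {ψ : characterSpace ℂ A | ψ b ≠ 0} ⊆ s :=
    (setOf_apply_ne_zero_subset_closure heval hdense hb).trans
      (closure_minimal interior_subset hsClosed)
  exact (closure_minimal hsupp hsClosed).trans hsN

theorem conditionM_of_indicator_mem_range (heval : ∀ x a, ev x a = j a x)
    (hdense : DenseRange ev) (hind : ∀ S : Set X, S.indicator 1 ∈ Set.range j)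
    (hsmall : ∀ ε > (0:ℝ), ∃ δ > 0, ∀ a : A, (∀ x, ‖j a x‖ ≤ δ) → ‖a‖ < ε) :
    ConditionM A := by
  constructor
  · intro φ U hU hφ
    obtain ⟨W, -, b, -, hWφ, hone, hsupp⟩ := exists_bump_of_isOpen heval hdense hind hU hφ
    exact ⟨b, hone φ (mem_of_mem_nhds hWφ),
      fun ψ hψ => not_not.1 fun h => hψ (hsupp (subset_closure h))⟩
  · intro φ a hφa U hU ε hε
    obtain ⟨δ, hδ, hsmallδ⟩ := hsmall ε hε
    have hN : IsOpen (interior U ∩ {ψ : characterSpace ℂ A | ‖ψ a‖ < δ}) :=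
      isOpen_interior.inter (isOpen_lt (continuous_characterSpace_apply a).norm continuous_const)
    have hφN : φ ∈ interior U ∩ {ψ : characterSpace ℂ A | ‖ψ a‖ < δ} :=
      ⟨mem_interior_iff_mem_nhds.2 hU, by simpa [hφa] using hδ⟩
    obtain ⟨W, hWN, b, hb, hWφ, hone, hsupp⟩ := exists_bump_of_isOpen heval hdense hind hN hφN
    refine ⟨b, ⟨W, hWφ, hone⟩, hsupp.trans (Set.inter_subset_left.trans interior_subset),
      hsmallδ _ fun x => ?_⟩
    rw [map_mul, Pi.mul_apply, hb]
    by_cases hx : x ∈ ev ⁻¹' W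
    · rw [Set.indicator_of_mem hx, Pi.one_apply, one_mul, ← heval]
      exact (hWN hx).2.le
    · rw [Set.indicator_of_notMem hx, zero_mul, norm_zero]
      exact hδ.le

end GelfandIndicator

theorem uniformlyDiscrete_lip_conditionM
    {X : Type*} [MetricSpace X] (α dX : ℝ) (hα : 0 < α ∧ α ≤ 1) (hdX : 0 < dX)
    (hud : UniformlyDiscrete X dX)
    (j : A →ₐ[ℂ] (X → ℂ))
    (hrange : Set.range j = {f | MemLipAlg α f} ∨ Set.range j = {f | MemLittleLip α f})
    (hnorm : ∀ a : A, ‖a‖ = lipNorm α (j a))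
    (ev : X → WeakDual.characterSpace ℂ A)
    (heval : ∀ (x : X) (a : A), ev x a = j a x) (hdenseX : DenseRange ev) :
    ConditionM A := by
  refine conditionM_of_indicator_mem_range heval hdenseX (fun S => ?_) fun ε hε => ?_
  · have hS : MemLittleLip α (S.indicator (1 : X → ℂ)) :=
      hud.memLittleLip_of_norm_le hdX hα.1.le (B := 1) fun x =>
        (norm_indicator_le_norm_self _ x).trans_eq (by simp)
    rcases hrange with h | h <;> rw [h]
    exacts [hS.1, hS]
  · obtain ⟨δ, hδ, hlt⟩ := hud.exists_lipNorm_lt hdX hα.1.le hε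
    exact ⟨δ, hδ, fun a ha => (hnorm a).trans_lt (hlt _ ha)⟩
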